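/- arXiv:2003.10321 — 6 statements merged into one kernel-verified Lean document; each statement's English description precedes it below -/
import Mathlib

section
/- Suppose |A(u,x) - A(u,y)| ≤ R(u)|a(x) - a(y)| for all u, x, y, and |A(u₁,x) - A(u₂,x)| ≤ L|u₁ - u₂| for u₁, u₂ ∈ [-M, M], with u_M(x) ∈ [-M, M] for all x. Then for u, v ∈ [-M, M], the Godunov flux satisfies |Ā(u,v,x̂,y) - Ā(u,v,x,y)| ≤ R(max(u, u_M(x̂)))|a(x̂) - a(x)| + L|u_M(x̂) - u_M(x)|. -/
/-- The Godunov interface flux of Adimurthi–Jaffré–Gowda. -/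
noncomputable def Abar (A : ℝ → ℝ → ℝ) (uM : ℝ → ℝ) (u v x y : ℝ) : ℝ :=
  max (A (max u (uM x)) x) (A (min v (uM y)) y)

theorem Abar_spatial_continuity
    (A : ℝ → ℝ → ℝ) (uM a R : ℝ → ℝ) (M L : ℝ)
    (hspace : ∀ u x y, |A u x - A u y| ≤ R u * |a x - a y|)
    (hLip : ∀ u₁ u₂ x, u₁ ∈ Set.Icc (-M) M → u₂ ∈ Set.Icc (-M) M →
      |A u₁ x - A u₂ x| ≤ L * |u₁ - u₂|)
    (huM : ∀ x, uM x ∈ Set.Icc (-M) M) :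
    ∀ u v x xhat y,
      u ∈ Set.Icc (-M) M → v ∈ Set.Icc (-M) M →
      |Abar A uM u v xhat y - Abar A uM u v x y| ≤
        R (max u (uM xhat)) * |a xhat - a x| + L * |uM xhat - uM x| := by
  intro u v x xhat y hu hv
  have hmem : ∀ z, max u (uM z) ∈ Set.Icc (-M) M := fun z =>
    ⟨le_max_of_le_left hu.1, max_le hu.2 (huM z).2⟩
  have h1 : |Abar A uM u v xhat y - Abar A uM u v x y| ≤
      |A (max u (uM xhat)) xhat - A (max u (uM x)) x| :=
    abs_max_sub_max_le_abs _ _ _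
  have h2 : |A (max u (uM xhat)) xhat - A (max u (uM x)) x| ≤
      |A (max u (uM xhat)) xhat - A (max u (uM xhat)) x| +
      |A (max u (uM xhat)) x - A (max u (uM x)) x| :=
    abs_sub_le _ _ _
  have h3 := hspace (max u (uM xhat)) xhat x
  have h4 := hLip (max u (uM xhat)) (max u (uM x)) x (hmem xhat) (hmem x)
  have h5 : |max u (uM xhat) - max u (uM x)| ≤ |uM xhat - uM x| := by
    rw [max_comm u (uM xhat), max_comm u (uM x)]
    exact abs_max_sub_max_le_abs _ _ _
  have hlast : |A (max u (uM xhat)) x - A (max u (uM x)) x| ≤ L * |uM xhat - uM x| := by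
    by_cases hL : 0 ≤ L
    · calc |A (max u (uM xhat)) x - A (max u (uM x)) x|
          ≤ L * |max u (uM xhat) - max u (uM x)| := h4
        _ ≤ L * |uM xhat - uM x| := by gcongr
    · push_neg at hL
      have hM : 0 ≤ M := by linarith [hu.1, hu.2]
      rcases hM.eq_or_lt with hM0 | hMpos
      · have e1 : uM xhat = 0 := le_antisymm (hM0 ▸ (huM xhat).2) (by simpa [← hM0] using (huM xhat).1)
        have e2 : uM x = 0 := le_antisymm (hM0 ▸ (huM x).2) (by simpa [← hM0] using (huM x).1)
        simp [e1, e2]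
      · exfalso
        have hc := hLip M (-M) x ⟨by linarith, le_rfl⟩ ⟨le_rfl, by linarith⟩
        rw [sub_neg_eq_add, abs_of_pos (by linarith : (0:ℝ) < M + M)] at hc
        nlinarith [abs_nonneg (A M x - A (-M) x)]
  linarith
end

section
/- Define the singular mapping Ψ(u,x) := sgn(u - u_M(x)) · A(u,x). If |A(u₁,x) - A(u₂,x)| ≤ L|u₁ - u₂| for u₁, u₂ ∈ [-M, M] uniformly in x, |A(u,x) - A(u,y)| ≤ R(u)|a(x) - a(y)|, and A(u_M(x),x) = 0, then for all u ∈ [-M, M] with u_M(x), u_M(y) ∈ [-M,M]: |Ψ(u,x) - Ψ(u,y)| ≤ L|u_M(x) - u_M(y)| + R(u)|a(x) - a(y)|. -/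
/-- The singular mapping `Ψ(u,x) = sgn(u - u_M(x)) A(u,x)`. -/
noncomputable def Psi (A : ℝ → ℝ → ℝ) (uM : ℝ → ℝ) (u x : ℝ) : ℝ :=
  Real.sign (u - uM x) * A u x

theorem Psi_spatial_continuity
    (A : ℝ → ℝ → ℝ) (uM a R : ℝ → ℝ) (M L : ℝ)
    (hLip : ∀ u₁ u₂ x, u₁ ∈ Set.Icc (-M) M → u₂ ∈ Set.Icc (-M) M →
      |A u₁ x - A u₂ x| ≤ L * |u₁ - u₂|)
    (hspace : ∀ u x y, |A u x - A u y| ≤ R u * |a x - a y|)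
    (hA0 : ∀ x, A (uM x) x = 0)
    (hdec : ∀ x, AntitoneOn (fun u => A u x) (Set.Iic (uM x)))
    (hinc : ∀ x, MonotoneOn (fun u => A u x) (Set.Ici (uM x))) :
    ∀ u x y, u ∈ Set.Icc (-M) M → uM x ∈ Set.Icc (-M) M → uM y ∈ Set.Icc (-M) M →
      |Psi A uM u x - Psi A uM u y| ≤ L * |uM x - uM y| + R u * |a x - a y| := by
  intro u x y hu hx hy
  have hR0 : 0 ≤ R u * |a x - a y| := le_trans (abs_nonneg _) (hspace u x y)
  have hL0 : 0 ≤ L * |uM x - uM y| := by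
    rcases eq_or_ne (uM x) (uM y) with h | h
    · simp [h]
    · exact le_trans (abs_nonneg _) (hLip (uM x) (uM y) x hx hy)
  have hsign : ∀ r t : ℝ, |Real.sign r * t| ≤ |t| := by
    intro r t
    rcases lt_trichotomy r 0 with h | h | h
    · simp [Real.sign_of_neg h]
    · simp [h]
    · simp [Real.sign_of_pos h]
  have key1 : Real.sign (u - uM x) = Real.sign (u - uM y) →
      |Psi A uM u x - Psi A uM u y| ≤ L * |uM x - uM y| + R u * |a x - a y| := by
    intro hss
    have heq : Psi A uM u x - Psi A uM u y
        = Real.sign (u - uM x) * (A u x - A u y) := by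
      simp only [Psi, hss]; ring
    rw [heq]
    calc |Real.sign (u - uM x) * (A u x - A u y)| ≤ |A u x - A u y| := hsign _ _
      _ ≤ R u * |a x - a y| := hspace u x y
      _ ≤ L * |uM x - uM y| + R u * |a x - a y| := by linarith
  have key2 : (uM y ≤ u ∧ u ≤ uM x) ∨ (uM x ≤ u ∧ u ≤ uM y) →
      |Psi A uM u x - Psi A uM u y| ≤ L * |uM x - uM y| + R u * |a x - a y| := by
    intro hcase
    have hbx : |A u x| ≤ L * |u - uM x| := by
      have := hLip u (uM x) x hu hx
      rwa [hA0 x, sub_zero] at this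
    have hby : |A u y| ≤ L * |u - uM y| := by
      have := hLip u (uM y) y hu hy
      rwa [hA0 y, sub_zero] at this
    have h1 : |Psi A uM u x| ≤ L * |u - uM x| := le_trans (hsign _ _) hbx
    have h2 : |Psi A uM u y| ≤ L * |u - uM y| := le_trans (hsign _ _) hby
    have hsum : L * |u - uM x| + L * |u - uM y| = L * |uM x - uM y| := by
      rcases hcase with ⟨h3, h4⟩ | ⟨h3, h4⟩
      · rw [abs_of_nonpos (by linarith), abs_of_nonneg (by linarith),
          abs_of_nonneg (by linarith)]
        ring
      · rw [abs_of_nonneg (by linarith), abs_of_nonpos (by linarith),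
          abs_of_nonpos (by linarith)]
        ring
    calc |Psi A uM u x - Psi A uM u y| ≤ |Psi A uM u x| + |Psi A uM u y| :=
          abs_sub _ _
      _ ≤ L * |u - uM x| + L * |u - uM y| := by linarith
      _ = L * |uM x - uM y| := hsum
      _ ≤ L * |uM x - uM y| + R u * |a x - a y| := by linarith
  rcases lt_trichotomy u (uM x) with hx1 | hx1 | hx1 <;>
    rcases lt_trichotomy u (uM y) with hy1 | hy1 | hy1
  · exact key1 (by rw [Real.sign_of_neg (by linarith), Real.sign_of_neg (by linarith)])
  · exact key2 (Or.inl ⟨le_of_eq hy1.symm, le_of_lt hx1⟩)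
  · exact key2 (Or.inl ⟨le_of_lt hy1, le_of_lt hx1⟩)
  · exact key2 (Or.inr ⟨le_of_eq hx1.symm, le_of_lt hy1⟩)
  · exact key1 (by rw [← hx1, ← hy1])
  · exact key2 (Or.inl ⟨le_of_lt hy1, le_of_eq hx1⟩)
  · exact key2 (Or.inr ⟨le_of_lt hx1, le_of_lt hy1⟩)
  · exact key2 (Or.inr ⟨le_of_lt hx1, le_of_eq hy1⟩)
  · exact key1 (by rw [Real.sign_of_pos (by linarith), Real.sign_of_pos (by linarith)])
end

section
/- Let A(u,x) be unimodal in u with minimum 0 at u_M(x), and let α ≥ 0. Define k⁺_α(x) ≥ u_M(x) by A(k⁺_α(x),x) = α. Then for any two points x_j, x_{j+1}, the Godunov flux satisfies Ā(k⁺_α(x_j), k⁺_α(x_{j+1}), x_j, x_{j+1}) = α; consequently the grid function {k⁺_α(x_j)} is a stationary solution of the explicit Godunov scheme u_j^{n+1} = u_j^n - λ(Ā(u_j^n, u_{j+1}^n, x_j, x_{j+1}) - Ā(u_{j-1}^n, u_j^n, x_{j-1}, x_j)). -/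
theorem kplus_stationary
    (A : ℝ → ℝ → ℝ) (uM kplus : ℝ → ℝ) (α : ℝ)
    (hα : 0 ≤ α)
    (hA0 : ∀ x, A (uM x) x = 0)
    (hdec : ∀ x, AntitoneOn (fun u => A u x) (Set.Iic (uM x)))
    (hinc : ∀ x, MonotoneOn (fun u => A u x) (Set.Ici (uM x)))
    (hk : ∀ x, uM x ≤ kplus x ∧ A (kplus x) x = α) :
    (∀ x y, Abar A uM (kplus x) (kplus y) x y = α) ∧
    (∀ (lam : ℝ) (xg : ℤ → ℝ) (j : ℤ),
      kplus (xg j) - lam * (Abar A uM (kplus (xg j)) (kplus (xg (j + 1))) (xg j) (xg (j + 1))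
        - Abar A uM (kplus (xg (j - 1))) (kplus (xg j)) (xg (j - 1)) (xg j)) = kplus (xg j)) := by
  have key : ∀ x y, Abar A uM (kplus x) (kplus y) x y = α := by
    intro x y
    have hx := hk x
    have hy := hk y
    unfold Abar
    rw [max_eq_left hx.1, min_eq_right hy.1, hx.2, hA0 y, max_eq_left hα]
  refine ⟨key, fun lam xg j => ?_⟩
  rw [key, key]
  ring
end

section
/- Analogously, for k⁻_α(x) ≤ u_M(x) with A(k⁻_α(x),x) = α, the Godunov flux satisfies Ā(k⁻_α(x_j), k⁻_α(x_{j+1}), x_j, x_{j+1}) = α, so {k⁻_α(x_j)} is also a stationary solution of the Godunov scheme. -/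
theorem kminus_stationary
    (A : ℝ → ℝ → ℝ) (uM kminus : ℝ → ℝ) (α : ℝ)
    (hα : 0 ≤ α)
    (hA0 : ∀ x, A (uM x) x = 0)
    (hdec : ∀ x, AntitoneOn (fun u => A u x) (Set.Iic (uM x)))
    (hinc : ∀ x, MonotoneOn (fun u => A u x) (Set.Ici (uM x)))
    (hk : ∀ x, kminus x ≤ uM x ∧ A (kminus x) x = α) :
    (∀ x y, Abar A uM (kminus x) (kminus y) x y = α) ∧
    (∀ (lam : ℝ) (xg : ℤ → ℝ) (j : ℤ),
      kminus (xg j) - lam * (Abar A uM (kminus (xg j)) (kminus (xg (j + 1))) (xg j) (xg (j + 1))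
        - Abar A uM (kminus (xg (j - 1))) (kminus (xg j)) (xg (j - 1)) (xg j)) = kminus (xg j)) := by
  have key : ∀ x y, Abar A uM (kminus x) (kminus y) x y = α := by
    intro x y
    have hx := hk x; have hy := hk y
    unfold Abar
    rw [max_eq_right hx.1, min_eq_left hy.1, hA0, hy.2, max_eq_right hα]
  exact ⟨key, fun lam xg j => by rw [key, key]; ring⟩
end

section
/- Under the CFL condition λL ≤ 1, where L is a uniform Lipschitz constant for u ↦ A(u,x) on [-M,M], the update map H_j(u,v,w) := v - λ(Ā(v,w,x_j,x_{j+1}) - Ā(u,v,x_{j-1},x_j)) is nondecreasing in each of its three arguments u, v, w on [-M,M]³. -/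
open Set

/-- The update `H_j`, with `xm, x, xp` standing for `x_{j-1}, x_j, x_{j+1}`. -/
noncomputable def godunovUpdate (A : ℝ → ℝ → ℝ) (uM : ℝ → ℝ) (lam xm x xp u v w : ℝ) : ℝ :=
  v - lam * (Abar A uM v w x xp - Abar A uM u v xm x)

lemma max_mem_Icc {a b c m : ℝ} (hc : c ∈ Icc a b) (hm : m ∈ Icc a b) : max c m ∈ Icc a b :=
  ⟨le_max_of_le_left hc.1, max_le hc.2 hm.2⟩

lemma min_mem_Icc {a b c m : ℝ} (hc : c ∈ Icc a b) (hm : m ∈ Icc a b) : min c m ∈ Icc a b :=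
  ⟨le_min hc.1 hm.1, min_le_of_left_le hc.2⟩

lemma abs_max_sub_max_add_abs_min_sub_min {v₁ v₂ : ℝ} (h : v₁ ≤ v₂) (m : ℝ) :
    |max v₂ m - max v₁ m| + |min v₂ m - min v₁ m| = v₂ - v₁ := by
  rw [abs_of_nonneg (sub_nonneg.2 (max_le_max_right m h)),
    abs_of_nonneg (sub_nonneg.2 (min_le_min_right m h))]
  linarith [max_add_min v₁ m, max_add_min v₂ m]

section Abar

variable {A : ℝ → ℝ → ℝ} {uM : ℝ → ℝ}

lemma Abar_mono_left {x : ℝ} (hinc : MonotoneOn (fun u => A u x) (Ici (uM x))) (v y : ℝ) :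
    Monotone fun u => Abar A uM u v x y := fun _ _ h =>
  max_le_max_right _ <|
    hinc (mem_Ici.2 (le_max_right _ _)) (mem_Ici.2 (le_max_right _ _)) (max_le_max_right _ h)

lemma Abar_anti_right {y : ℝ} (hdec : AntitoneOn (fun u => A u y) (Iic (uM y))) (u x : ℝ) :
    Antitone fun v => Abar A uM u v x y := fun _ _ h =>
  max_le_max_left _ <|
    hdec (mem_Iic.2 (min_le_right _ _)) (mem_Iic.2 (min_le_right _ _)) (min_le_min_right _ h)

lemma Abar_sub_Abar_left_le {M L x : ℝ}
    (hLip : ∀ u₁ u₂, u₁ ∈ Icc (-M) M → u₂ ∈ Icc (-M) M → |A u₁ x - A u₂ x| ≤ L * |u₁ - u₂|)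
    (huM : uM x ∈ Icc (-M) M) {v₁ v₂ : ℝ} (hv₁ : v₁ ∈ Icc (-M) M) (hv₂ : v₂ ∈ Icc (-M) M)
    (w y : ℝ) :
    Abar A uM v₂ w x y - Abar A uM v₁ w x y ≤ L * |max v₂ (uM x) - max v₁ (uM x)| :=
  calc Abar A uM v₂ w x y - Abar A uM v₁ w x y
      ≤ |A (max v₂ (uM x)) x - A (max v₁ (uM x)) x| :=
        (le_abs_self _).trans (abs_max_sub_max_le_abs _ _ _)
    _ ≤ L * |max v₂ (uM x) - max v₁ (uM x)| :=
        hLip _ _ (max_mem_Icc hv₂ huM) (max_mem_Icc hv₁ huM)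

lemma Abar_sub_Abar_right_le {M L x : ℝ}
    (hLip : ∀ u₁ u₂, u₁ ∈ Icc (-M) M → u₂ ∈ Icc (-M) M → |A u₁ x - A u₂ x| ≤ L * |u₁ - u₂|)
    (huM : uM x ∈ Icc (-M) M) {v₁ v₂ : ℝ} (hv₁ : v₁ ∈ Icc (-M) M) (hv₂ : v₂ ∈ Icc (-M) M)
    (u y : ℝ) :
    Abar A uM u v₁ y x - Abar A uM u v₂ y x ≤ L * |min v₂ (uM x) - min v₁ (uM x)| := by
  calc Abar A uM u v₁ y x - Abar A uM u v₂ y x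
      ≤ |A (min v₁ (uM x)) x - A (min v₂ (uM x)) x| := by
        unfold Abar
        rw [max_comm (A _ y), max_comm (A _ y)]
        exact (le_abs_self _).trans (abs_max_sub_max_le_abs _ _ _)
    _ ≤ L * |min v₂ (uM x) - min v₁ (uM x)| := by
        rw [abs_sub_comm]
        exact hLip _ _ (min_mem_Icc hv₂ huM) (min_mem_Icc hv₁ huM)

end Abar

section godunovUpdate

variable {A : ℝ → ℝ → ℝ} {uM : ℝ → ℝ} {lam xm x xp : ℝ}

lemma godunovUpdate_mono_left (hinc : MonotoneOn (fun u => A u xm) (Ici (uM xm)))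
    (hlam : 0 ≤ lam) (v w : ℝ) : Monotone fun u => godunovUpdate A uM lam xm x xp u v w :=
  fun _ _ h =>
    sub_le_sub_left
      (mul_le_mul_of_nonneg_left (sub_le_sub_left (Abar_mono_left hinc v x h) _) hlam) v

lemma godunovUpdate_mono_right (hdec : AntitoneOn (fun u => A u xp) (Iic (uM xp)))
    (hlam : 0 ≤ lam) (u v : ℝ) : Monotone fun w => godunovUpdate A uM lam xm x xp u v w :=
  fun _ _ h =>
    sub_le_sub_left
      (mul_le_mul_of_nonneg_left (sub_le_sub_right (Abar_anti_right hdec v x h) _) hlam) v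

lemma godunovUpdate_mono_mid {M L : ℝ}
    (hLip : ∀ u₁ u₂, u₁ ∈ Icc (-M) M → u₂ ∈ Icc (-M) M → |A u₁ x - A u₂ x| ≤ L * |u₁ - u₂|)
    (huM : uM x ∈ Icc (-M) M) (hlam : 0 ≤ lam) (hCFL : lam * L ≤ 1) (u w : ℝ)
    {v₁ v₂ : ℝ} (hv₁ : v₁ ∈ Icc (-M) M) (hv₂ : v₂ ∈ Icc (-M) M) (h : v₁ ≤ v₂) :
    godunovUpdate A uM lam xm x xp u v₁ w ≤ godunovUpdate A uM lam xm x xp u v₂ w := by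
  have hflux : Abar A uM v₂ w x xp - Abar A uM v₁ w x xp
      + (Abar A uM u v₁ xm x - Abar A uM u v₂ xm x) ≤ L * (v₂ - v₁) := by
    rw [← abs_max_sub_max_add_abs_min_sub_min h (uM x), mul_add]
    exact add_le_add (Abar_sub_Abar_left_le hLip huM hv₁ hv₂ w xp)
      (Abar_sub_Abar_right_le hLip huM hv₁ hv₂ u xm)
  have hCFL' : lam * L * (v₂ - v₁) ≤ v₂ - v₁ :=
    (mul_le_mul_of_nonneg_right hCFL (sub_nonneg.2 h)).trans_eq (one_mul _)
  unfold godunovUpdate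
  linarith [mul_le_mul_of_nonneg_left hflux hlam]

end godunovUpdate

theorem scheme_update_monotone_general
    (A : ℝ → ℝ → ℝ) (uM : ℝ → ℝ) (M L lam : ℝ) (xm x xp : ℝ)
    (hdec : ∀ y, AntitoneOn (fun u => A u y) (Set.Iic (uM y)))
    (hinc : ∀ y, MonotoneOn (fun u => A u y) (Set.Ici (uM y)))
    (hLip : ∀ u₁ u₂ y, u₁ ∈ Set.Icc (-M) M → u₂ ∈ Set.Icc (-M) M →
      |A u₁ y - A u₂ y| ≤ L * |u₁ - u₂|)
    (huM : ∀ y, uM y ∈ Set.Icc (-M) M)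
    (hlam : 0 < lam) (hCFL : lam * L ≤ 1) :
    let H : ℝ → ℝ → ℝ → ℝ := fun u v w =>
      v - lam * (Abar A uM v w x xp - Abar A uM u v xm x)
    (∀ u₁ u₂ v w, u₁ ∈ Set.Icc (-M) M → u₂ ∈ Set.Icc (-M) M →
        v ∈ Set.Icc (-M) M → w ∈ Set.Icc (-M) M →
        u₁ ≤ u₂ → H u₁ v w ≤ H u₂ v w) ∧
    (∀ u v₁ v₂ w, u ∈ Set.Icc (-M) M → v₁ ∈ Set.Icc (-M) M →
        v₂ ∈ Set.Icc (-M) M → w ∈ Set.Icc (-M) M →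
        v₁ ≤ v₂ → H u v₁ w ≤ H u v₂ w) ∧
    (∀ u v w₁ w₂, u ∈ Set.Icc (-M) M → v ∈ Set.Icc (-M) M →
        w₁ ∈ Set.Icc (-M) M → w₂ ∈ Set.Icc (-M) M →
        w₁ ≤ w₂ → H u v w₁ ≤ H u v w₂) :=
  ⟨fun _ _ v w _ _ _ _ h => godunovUpdate_mono_left (hinc xm) hlam.le v w h,
    fun u _ _ w _ hv₁ hv₂ _ h =>
      godunovUpdate_mono_mid (hLip · · x) (huM x) hlam.le hCFL u w hv₁ hv₂ h,
    fun u v _ _ _ _ _ _ h => godunovUpdate_mono_right (hdec xp) hlam.le u v h⟩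

theorem scheme_update_monotone
    (A : ℝ → ℝ → ℝ) (uM : ℝ → ℝ) (M L lam : ℝ) (xm x xp : ℝ)
    (hA0 : ∀ y, A (uM y) y = 0)
    (hdec : ∀ y, AntitoneOn (fun u => A u y) (Set.Iic (uM y)))
    (hinc : ∀ y, MonotoneOn (fun u => A u y) (Set.Ici (uM y)))
    (hLip : ∀ u₁ u₂ y, u₁ ∈ Set.Icc (-M) M → u₂ ∈ Set.Icc (-M) M →
      |A u₁ y - A u₂ y| ≤ L * |u₁ - u₂|)
    (huM : ∀ y, uM y ∈ Set.Icc (-M) M)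
    (hlam : 0 < lam) (hCFL : lam * L ≤ 1) :
    let H : ℝ → ℝ → ℝ → ℝ := fun u v w =>
      v - lam * (Abar A uM v w x xp - Abar A uM u v xm x)
    (∀ u₁ u₂ v w, u₁ ∈ Set.Icc (-M) M → u₂ ∈ Set.Icc (-M) M →
        v ∈ Set.Icc (-M) M → w ∈ Set.Icc (-M) M →
        u₁ ≤ u₂ → H u₁ v w ≤ H u₂ v w) ∧
    (∀ u v₁ v₂ w, u ∈ Set.Icc (-M) M → v₁ ∈ Set.Icc (-M) M →
        v₂ ∈ Set.Icc (-M) M → w ∈ Set.Icc (-M) M →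
        v₁ ≤ v₂ → H u v₁ w ≤ H u v₂ w) ∧
    (∀ u v w₁ w₂, u ∈ Set.Icc (-M) M → v ∈ Set.Icc (-M) M →
        w₁ ∈ Set.Icc (-M) M → w₂ ∈ Set.Icc (-M) M →
        w₁ ≤ w₂ → H u v w₁ ≤ H u v w₂) :=
  scheme_update_monotone_general A uM M L lam xm x xp hdec hinc hLip huM hlam hCFL
end

section
/- Let Γ be a map on summable grid functions that is monotone (order-preserving), conservative (Σ_j (Γu)_j = Σ_j u_j for compactly supported u), and commutes with translations in j only through its conservative flux form (Γu)_j = u_j - λ(F_{j+1/2}(u) - F_{j-1/2}(u)). Then Γ is L¹-contractive: Σ_j |(Γu)_j - (Γv)_j| ≤ Σ_j |u_j - v_j| for compactly supported grid functions u, v with values in the domain of monotonicity. -/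
theorem crandall_tartar_l1_contractive
    (M lam : ℝ) (hlam : 0 < lam)
    (Γ : (ℤ → ℝ) → (ℤ → ℝ)) (F : (ℤ → ℝ) → ℤ → ℝ)
    (hmono : ∀ u v : ℤ → ℝ, (∀ j, u j ∈ Set.Icc (-M) M) → (∀ j, v j ∈ Set.Icc (-M) M) →
      (∀ j, u j ≤ v j) → ∀ j, Γ u j ≤ Γ v j)
    (hcons : ∀ u : ℤ → ℝ, (Function.support u).Finite → (∀ j, u j ∈ Set.Icc (-M) M) →
      Summable (Γ u) ∧ ∑' j, Γ u j = ∑' j, u j)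
    (hflux : ∀ (u : ℤ → ℝ) (j : ℤ), Γ u j = u j - lam * (F u j - F u (j - 1))) :
    ∀ u v : ℤ → ℝ, (Function.support u).Finite → (Function.support v).Finite →
      (∀ j, u j ∈ Set.Icc (-M) M) → (∀ j, v j ∈ Set.Icc (-M) M) →
      ∑' j, |Γ u j - Γ v j| ≤ ∑' j, |u j - v j| := by
  intro u v hu hv hum hvm
  set w : ℤ → ℝ := fun j => max (u j) (v j) with hwdef
  have hwsupp : (Function.support w).Finite := by
    apply (hu.union hv).subset
    intro j hj
    by_contra h
    simp only [Set.mem_union, Function.mem_support, not_or, not_not] at h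
    simp only [Function.mem_support, hwdef, h.1, h.2, max_self] at hj
    exact hj rfl
  have hwm : ∀ j, w j ∈ Set.Icc (-M) M := fun j =>
    ⟨le_trans (hum j).1 (le_max_left _ _), max_le (hum j).2 (hvm j).2⟩
  obtain ⟨hΓu, hΓuS⟩ := hcons u hu hum
  obtain ⟨hΓv, hΓvS⟩ := hcons v hv hvm
  obtain ⟨hΓw, hΓwS⟩ := hcons w hwsupp hwm
  have hle1 : ∀ j, Γ u j ≤ Γ w j := hmono u w hum hwm fun j => le_max_left _ _
  have hle2 : ∀ j, Γ v j ≤ Γ w j := hmono v w hvm hwm fun j => le_max_right _ _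
  have hSu : Summable u := summable_of_finite_support hu
  have hSv : Summable v := summable_of_finite_support hv
  have hSw : Summable w := summable_of_finite_support hwsupp
  have hpt : ∀ j, |Γ u j - Γ v j| ≤ 2 * Γ w j - Γ u j - Γ v j := by
    intro j
    rw [abs_le]
    constructor <;> linarith [hle1 j, hle2 j]
  have hS2 : Summable (fun j => 2 * Γ w j - Γ u j - Γ v j) :=
    ((hΓw.mul_left 2).sub hΓu).sub hΓv
  have hS1 : Summable (fun j => |Γ u j - Γ v j|) := (hΓu.sub hΓv).abs
  calc ∑' j, |Γ u j - Γ v j| ≤ ∑' j, (2 * Γ w j - Γ u j - Γ v j) :=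
        Summable.tsum_le_tsum hpt hS1 hS2
    _ = 2 * (∑' j, Γ w j) - (∑' j, Γ u j) - (∑' j, Γ v j) := by
        rw [Summable.tsum_sub ((hΓw.mul_left 2).sub hΓu) hΓv, Summable.tsum_sub (hΓw.mul_left 2) hΓu,
          tsum_mul_left]
    _ = 2 * (∑' j, w j) - (∑' j, u j) - (∑' j, v j) := by rw [hΓuS, hΓvS, hΓwS]
    _ = ∑' j, (2 * w j - u j - v j) := by
        rw [Summable.tsum_sub ((hSw.mul_left 2).sub hSu) hSv, Summable.tsum_sub (hSw.mul_left 2) hSu,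
          tsum_mul_left]
    _ = ∑' j, |u j - v j| := by
        apply tsum_congr
        intro j
        simp only [hwdef]
        rcases le_total (u j) (v j) with h | h
        · rw [max_eq_right h, abs_of_nonpos (by linarith)]; ring
        · rw [max_eq_left h, abs_of_nonneg (by linarith)]; ring
end
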